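/- Let f be a polynomial in n variables over ℂ whose Jacobian algebra Q_f is finite-dimensional with dimension μ(f). Then the Jacobian algebra of f ⊕ f (the polynomial f(x₁,…,xₙ) + f(y₁,…,yₙ) in 2n variables) is finite-dimensional of dimension μ(f)², i.e. μ(f ⊕ f) = μ(f)². -/
import Mathlib

open MvPolynomial TensorProduct

/-- The Jacobian ideal of a multivariate polynomial: the ideal generated by its
partial derivatives. -/
noncomputable def jacobianIdeal {σ : Type*} (f : MvPolynomial σ ℂ) :
    Ideal (MvPolynomial σ ℂ) :=
  Ideal.span (Set.range fun i : σ => MvPolynomial.pderiv i f)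

/-- `f ⊕ f`: the polynomial `f(x₁,…,xₙ) + f(y₁,…,yₙ)` in `2n` variables. -/
noncomputable def doubling {n : ℕ} (f : MvPolynomial (Fin n) ℂ) :
    MvPolynomial (Fin n ⊕ Fin n) ℂ :=
  rename Sum.inl f + rename Sum.inr f

private lemma pderiv_rename_of_notMem_range {σ τ : Type*} [DecidableEq τ]
    {g : σ → τ} {j : τ} (hj : j ∉ Set.range g) (p : MvPolynomial σ ℂ) :
    MvPolynomial.pderiv j (rename g p) = 0 := by
  apply MvPolynomial.pderiv_eq_zero_of_notMem_vars
  intro h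
  obtain ⟨i, _, rfl⟩ := MvPolynomial.mem_vars_rename g p h
  exact hj ⟨i, rfl⟩

private lemma pderiv_doubling_inl {n : ℕ} (f : MvPolynomial (Fin n) ℂ) (i : Fin n) :
    MvPolynomial.pderiv (Sum.inl i) (doubling f) = rename Sum.inl (MvPolynomial.pderiv i f) := by
  classical
  rw [doubling, map_add, MvPolynomial.pderiv_rename Sum.inl_injective,
    pderiv_rename_of_notMem_range (by simp), add_zero]

private lemma pderiv_doubling_inr {n : ℕ} (f : MvPolynomial (Fin n) ℂ) (i : Fin n) :
    MvPolynomial.pderiv (Sum.inr i) (doubling f) = rename Sum.inr (MvPolynomial.pderiv i f) := by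
  classical
  rw [doubling, map_add, MvPolynomial.pderiv_rename Sum.inr_injective,
    pderiv_rename_of_notMem_range (by simp), zero_add]

/-- If the Jacobian algebra `Q_f` is finite-dimensional of dimension `μ(f)`, then the
Jacobian algebra of `f ⊕ f` is finite-dimensional of dimension `μ(f)²`:
`μ(f ⊕ f) = μ(f)²`. -/
theorem milnor_number_doubling {n : ℕ} (f : MvPolynomial (Fin n) ℂ)
    (hfd : FiniteDimensional ℂ (MvPolynomial (Fin n) ℂ ⧸ jacobianIdeal f)) :
    FiniteDimensional ℂ (MvPolynomial (Fin n ⊕ Fin n) ℂ ⧸ jacobianIdeal (doubling f)) ∧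
    Module.finrank ℂ (MvPolynomial (Fin n ⊕ Fin n) ℂ ⧸ jacobianIdeal (doubling f)) =
      (Module.finrank ℂ (MvPolynomial (Fin n) ℂ ⧸ jacobianIdeal f)) ^ 2 := by
  classical
  let I := jacobianIdeal f
  let J := jacobianIdeal (doubling f)
  let Q := MvPolynomial (Fin n) ℂ ⧸ I
  let QS := MvPolynomial (Fin n ⊕ Fin n) ℂ ⧸ J
  have hle₁ : I ≤ Ideal.comap ((rename (R := ℂ) Sum.inl).toRingHom) J := by
    rw [show I = Ideal.span (Set.range fun i : Fin n => MvPolynomial.pderiv i f) from rfl,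
      Ideal.span_le]
    rintro _ ⟨i, rfl⟩
    simp only [SetLike.mem_coe, Ideal.mem_comap, AlgHom.toRingHom_eq_coe, RingHom.coe_coe]
    rw [← pderiv_doubling_inl]
    exact Ideal.subset_span ⟨Sum.inl i, rfl⟩
  have hle₂ : I ≤ Ideal.comap ((rename (R := ℂ) Sum.inr).toRingHom) J := by
    rw [show I = Ideal.span (Set.range fun i : Fin n => MvPolynomial.pderiv i f) from rfl,
      Ideal.span_le]
    rintro _ ⟨i, rfl⟩
    simp only [SetLike.mem_coe, Ideal.mem_comap, AlgHom.toRingHom_eq_coe, RingHom.coe_coe]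
    rw [← pderiv_doubling_inr]
    exact Ideal.subset_span ⟨Sum.inr i, rfl⟩
  have hker₁ : ∀ a, a ∈ I → ((Ideal.Quotient.mkₐ ℂ J).comp
      (rename (R := ℂ) Sum.inl)) a = 0 := by
    intro a ha
    have h := hle₁ ha
    rw [Ideal.mem_comap] at h
    exact Ideal.Quotient.eq_zero_iff_mem.mpr h
  have hker₂ : ∀ a, a ∈ I → ((Ideal.Quotient.mkₐ ℂ J).comp
      (rename (R := ℂ) Sum.inr)) a = 0 := by
    intro a ha
    have h := hle₂ ha
    rw [Ideal.mem_comap] at h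
    exact Ideal.Quotient.eq_zero_iff_mem.mpr h
  let ψ₁ : Q →ₐ[ℂ] QS := Ideal.Quotient.liftₐ I _ hker₁
  let ψ₂ : Q →ₐ[ℂ] QS := Ideal.Quotient.liftₐ I _ hker₂
  let ψ : (Q ⊗[ℂ] Q) →ₐ[ℂ] QS :=
    Algebra.TensorProduct.lift ψ₁ ψ₂ (fun x y => Commute.all _ _)
  let v : Fin n ⊕ Fin n → Q ⊗[ℂ] Q := Sum.elim
    (fun i => (Ideal.Quotient.mkₐ ℂ I (MvPolynomial.X i)) ⊗ₜ[ℂ] 1)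
    (fun i => 1 ⊗ₜ[ℂ] (Ideal.Quotient.mkₐ ℂ I (MvPolynomial.X i)))
  let φ₀ : MvPolynomial (Fin n ⊕ Fin n) ℂ →ₐ[ℂ] Q ⊗[ℂ] Q := aeval v
  have hφl : φ₀.comp (rename (R := ℂ) Sum.inl) =
      (Algebra.TensorProduct.includeLeft (R := ℂ) (S := ℂ)).comp (Ideal.Quotient.mkₐ ℂ I) := by
    apply MvPolynomial.algHom_ext
    intro i
    simp [φ₀, v]
  have hφr : φ₀.comp (rename (R := ℂ) Sum.inr) =
      (Algebra.TensorProduct.includeRight (R := ℂ)).comp (Ideal.Quotient.mkₐ ℂ I) := by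
    apply MvPolynomial.algHom_ext
    intro i
    simp [φ₀, v]
  have hkerφ : ∀ a, a ∈ J → φ₀ a = 0 := by
    have : J ≤ Ideal.comap φ₀.toRingHom ⊥ := by
      rw [show J = Ideal.span (Set.range fun j : Fin n ⊕ Fin n =>
        MvPolynomial.pderiv j (doubling f)) from rfl, Ideal.span_le]
      rintro _ ⟨(i | i), rfl⟩ <;>
        simp only [SetLike.mem_coe, Ideal.mem_comap, AlgHom.toRingHom_eq_coe, RingHom.coe_coe,
          Ideal.mem_bot]
      · rw [pderiv_doubling_inl, ← AlgHom.comp_apply, hφl]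
        have h0 : MvPolynomial.pderiv i f ∈ I := Ideal.subset_span ⟨i, rfl⟩
        simp [Ideal.Quotient.eq_zero_iff_mem.mpr h0]
      · rw [pderiv_doubling_inr, ← AlgHom.comp_apply, hφr]
        have h0 : MvPolynomial.pderiv i f ∈ I := Ideal.subset_span ⟨i, rfl⟩
        simp [Ideal.Quotient.eq_zero_iff_mem.mpr h0]
    intro a ha
    have h := this ha
    rwa [Ideal.mem_comap, Ideal.mem_bot] at h
  let φ : QS →ₐ[ℂ] Q ⊗[ℂ] Q := Ideal.Quotient.liftₐ J φ₀ hkerφ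
  have hψ₁ : ∀ x, ψ₁ (Ideal.Quotient.mk I x) = Ideal.Quotient.mk J (rename Sum.inl x) :=
    fun x => AlgHom.congr_fun (Ideal.Quotient.liftₐ_comp I _ hker₁) x
  have hψ₂ : ∀ x, ψ₂ (Ideal.Quotient.mk I x) = Ideal.Quotient.mk J (rename Sum.inr x) :=
    fun x => AlgHom.congr_fun (Ideal.Quotient.liftₐ_comp I _ hker₂) x
  have hφm : ∀ y, φ (Ideal.Quotient.mk J y) = φ₀ y :=
    fun y => AlgHom.congr_fun (Ideal.Quotient.liftₐ_comp J φ₀ hkerφ) y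
  have h1 : φ.comp ψ = AlgHom.id ℂ (Q ⊗[ℂ] Q) := by
    apply Algebra.TensorProduct.ext
    · apply Ideal.Quotient.algHom_ext
      apply MvPolynomial.algHom_ext
      intro i
      simp [ψ, hψ₁, hψ₂, hφm, φ₀, v, Algebra.TensorProduct.lift_tmul, Ideal.Quotient.mkₐ_eq_mk] <;> rfl
    · apply Ideal.Quotient.algHom_ext
      apply MvPolynomial.algHom_ext
      intro i
      simp [ψ, hψ₁, hψ₂, hφm, φ₀, v, Algebra.TensorProduct.lift_tmul, Ideal.Quotient.mkₐ_eq_mk] <;> rfl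
  have h2 : ψ.comp φ = AlgHom.id ℂ QS := by
    apply Ideal.Quotient.algHom_ext
    apply MvPolynomial.algHom_ext
    rintro (i | i) <;> simp [ψ, hψ₁, hψ₂, hφm, φ₀, v, Algebra.TensorProduct.lift_tmul, Ideal.Quotient.mkₐ_eq_mk] <;> rfl
  let e : QS ≃ₐ[ℂ] Q ⊗[ℂ] Q := AlgEquiv.ofAlgHom φ ψ h1 h2
  have hfin : FiniteDimensional ℂ (Q ⊗[ℂ] Q) := Module.Finite.tensorProduct ℂ Q Q
  have hfd2 : FiniteDimensional ℂ QS := Module.Finite.equiv e.symm.toLinearEquiv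
  refine ⟨hfd2, ?_⟩
  rw [e.toLinearEquiv.finrank_eq, Module.finrank_tensorProduct, sq]
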